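/- One has the identity F_e(x,y)^p − φ(F_e(x,y)) = p·y^{p^e} in R, for every e ≥ 0. -/

import Mathlib

open MvPolynomial

/-- The ideal `(p) ⊆ ℤ` is prime when `p` is a prime number. -/
instance spanIntPrime (p : ℕ) [hp : Fact p.Prime] : (Ideal.span {(p : ℤ)}).IsPrime :=
  (Ideal.span_singleton_prime (by exact_mod_cast hp.out.ne_zero)).mpr
    (Nat.prime_iff_prime_int.mp hp.out)

/-- `K = ℤ_(p)`, the localization of `ℤ` at the prime ideal `(p)`. -/
abbrev Kloc (p : ℕ) [Fact p.Prime] : Type :=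
  Localization.AtPrime (Ideal.span {(p : ℤ)})

/-- `R = K[x,y]`, the polynomial ring in two variables (`x = X 0`, `y = X 1`) over `K`. -/
abbrev Rpoly (p : ℕ) [Fact p.Prime] : Type :=
  MvPolynomial (Fin 2) (Kloc p)

/-- The polynomials `F_n ∈ ℤ[s,t]` (with `s = X 0`, `t = X 1`), defined recursively by
`F_0(s,t) = s` and `F_n(s,t) = F_{n-1}(s,t)^p - p · F_{n-1}(t,0)`. -/
noncomputable def F (p : ℕ) : ℕ → MvPolynomial (Fin 2) ℤ
  | 0 => X 0
  | n + 1 => F p n ^ p - (p : MvPolynomial (Fin 2) ℤ) * (aeval ![X 1, 0] (F p n))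

/-- `F_n(x,y) ∈ R`: the image of `F_n` under the evaluation `s ↦ x`, `t ↦ y`. -/
noncomputable def Fxy (p : ℕ) [Fact p.Prime] (n : ℕ) : Rpoly p :=
  MvPolynomial.map (Int.castRingHom (Kloc p)) (F p n)

/-!
Since `F_n(t,0) = t^{p^n}`, the recursion reads `F_{n+1} = F_n^p - p y^{p^n}` in `R`, and then
`φ(F_n) = F_{n+1}` by induction: both sides satisfy the same recursion, starting from
`φ(x) = x^p - p y = F_1`. The identity is this recursion with `F_{n+1}` replaced by `φ(F_n)`.
-/

theorem aeval_F_X_one_zero {p : ℕ} (hp : p ≠ 0) (n : ℕ) :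
    aeval ![X 1, 0] (F p n) = (X 1 : MvPolynomial (Fin 2) ℤ) ^ p ^ n := by
  induction n with
  | zero => simp [F]
  | succ n ih =>
    rw [F, map_sub, map_mul, map_pow, ih, map_pow, aeval_X, map_natCast]
    simp only [Matrix.cons_val_one, Matrix.cons_val_zero, zero_pow (pow_ne_zero n hp), mul_zero,
      sub_zero, ← pow_mul, ← pow_succ]

theorem Fxy_succ (p : ℕ) [hp : Fact p.Prime] (n : ℕ) :
    Fxy p (n + 1) = Fxy p n ^ p - (p : Rpoly p) * X 1 ^ p ^ n := by
  rw [Fxy, F, aeval_F_X_one_zero hp.out.ne_zero, map_sub, map_mul, map_pow, map_pow, map_X,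
    map_natCast, Fxy]

theorem map_Fxy_eq_Fxy_succ (p : ℕ) [Fact p.Prime] (φ : Rpoly p →ₐ[Kloc p] Rpoly p)
    (hx : φ (X 0) = X 0 ^ p - (p : Rpoly p) * X 1) (hy : φ (X 1) = X 1 ^ p) (n : ℕ) :
    φ (Fxy p n) = Fxy p (n + 1) := by
  induction n with
  | zero => simp [Fxy, F, hx]
  | succ n ih =>
    rw [Fxy_succ p n, map_sub, map_mul, map_pow, map_pow, hy, map_natCast, ih, Fxy_succ p (n + 1),
      ← pow_mul, ← pow_succ']

/-- With `φ : R → R` the `K`-algebra homomorphism determined by `φ(x) = x^p - p·y`,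
`φ(y) = y^p`, one has `F_e(x,y)^p - φ(F_e(x,y)) = p·y^{p^e}` for every `e ≥ 0`. -/
theorem F_pow_sub_phi_F (p : ℕ) [hp : Fact p.Prime]
    (φ : Rpoly p →ₐ[Kloc p] Rpoly p)
    (hx : φ (X 0) = X 0 ^ p - (p : Rpoly p) * X 1)
    (hy : φ (X 1) = X 1 ^ p) :
    ∀ e : ℕ, Fxy p e ^ p - φ (Fxy p e) = (p : Rpoly p) * X 1 ^ p ^ e := by
  intro e
  rw [map_Fxy_eq_Fxy_succ p φ hx hy, Fxy_succ, sub_sub_cancel]
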